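/- (Prediction with i.i.d. side information.) Let (X, Σ) be a measurable space, P a probability measure on X, and let φ : X^n × {−1,+1}^n → ℝ be bounded measurable and stable in its second argument, i.e. |φ(x; y_{1:t−1},+1,y_{t+1:n}) − φ(x; y_{1:t−1},−1,y_{t+1:n})| ≤ 1/n for all x ∈ X^n, all t, and all y. Suppose x_1,…,x_n are drawn i.i.d. from P. Then there exists a prediction strategy, given by measurable functions q_t : X^t × {−1,+1}^{t−1} → [−1,1], such that for every fixed y ∈ {−1,+1}^n, E_{x∼P^n}[ (1/n) Σ_{t=1}^n (1 − y_t·q_t(x_{1:t}, y_{1:t−1}))/2 ] ≤ E_{x∼P^n} φ(x; y), if and only if E_{x∼P^n, ε} φ(x; ε) ≥ 1/2, where ε is uniform on {−1,+1}^n independent of x. -/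

import Mathlib

open Finset MeasureTheory

noncomputable section

/-- The real ±1 value of a Boolean bit (`true ↦ +1`, `false ↦ -1`). -/
def sgn (b : Bool) : ℝ := if b then 1 else -1

/-- The history (prefix) of the sequence `y` strictly before time `t`. -/
def pref {n : ℕ} (y : Fin n → Bool) (t : Fin n) : Fin t.1 → Bool :=
  fun s => y ⟨s.1, s.2.trans t.2⟩

namespace PredAux

lemma sgn_abs (b : Bool) : |sgn b| = 1 := by cases b <;> simp [sgn]

lemma sgn_not (b : Bool) : sgn (!b) = - sgn b := by cases b <;> simp [sgn]

/-- Merge: take `y` on coordinates `< t`, `ε` on the rest. -/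
def merge {n : ℕ} (t : ℕ) (y ε : Fin n → Bool) : Fin n → Bool :=
  fun s => if s.1 < t then y s else ε s

/-- Average of `F` over uniformly random coordinates `≥ t`. -/
def A {n : ℕ} (F : (Fin n → Bool) → ℝ) (t : ℕ) (y : Fin n → Bool) : ℝ :=
  (∑ ε : Fin n → Bool, F (merge t y ε)) / 2 ^ n

lemma card_fun_bool (n : ℕ) : Fintype.card (Fin n → Bool) = 2 ^ n := by
  simp [Fintype.card_fun]

lemma A_congr {n : ℕ} (F : (Fin n → Bool) → ℝ) (t : ℕ) {y y' : Fin n → Bool}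
    (h : ∀ s : Fin n, s.1 < t → y s = y' s) : A F t y = A F t y' := by
  unfold A
  congr 1
  refine Finset.sum_congr rfl fun ε _ => ?_
  congr 1
  funext s
  unfold merge
  by_cases hs : s.1 < t <;> simp [hs, h s]

lemma A_top {n : ℕ} (F : (Fin n → Bool) → ℝ) (y : Fin n → Bool) : A F n y = F y := by
  unfold A
  have h : ∀ ε : Fin n → Bool, merge n y ε = y := by
    intro ε; funext s; simp [merge, s.2]
  simp only [h]
  rw [Finset.sum_const, Finset.card_univ, card_fun_bool, nsmul_eq_mul]
  push_cast
  field_simp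

lemma A_zero {n : ℕ} (F : (Fin n → Bool) → ℝ) (y : Fin n → Bool) :
    A F 0 y = (∑ ε : Fin n → Bool, F ε) / 2 ^ n := by
  unfold A
  have h : ∀ ε : Fin n → Bool, merge 0 y ε = ε := by
    intro ε; funext s; simp [merge]
  simp only [h]

lemma sum_update_add {n : ℕ} (g : (Fin n → Bool) → ℝ) (t : Fin n) :
    (∑ ε : Fin n → Bool, g (Function.update ε t true)) +
      (∑ ε : Fin n → Bool, g (Function.update ε t false)) =
    2 * ∑ ε : Fin n → Bool, g ε := by
  classical
  have hinv : Function.Involutive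
      (fun ε : Fin n → Bool => Function.update ε t (!(ε t))) := by
    intro ε
    funext s
    by_cases hs : s = t
    · subst hs; simp
    · simp [Function.update_of_ne hs]
  have h1 : (∑ ε : Fin n → Bool, g (Function.update ε t (!(ε t))))
      = ∑ ε : Fin n → Bool, g ε := hinv.bijective.sum_comp g
  have h2 : ∀ ε : Fin n → Bool,
      g (Function.update ε t true) + g (Function.update ε t false)
        = g (Function.update ε t (ε t)) + g (Function.update ε t (!(ε t))) := by
    intro ε; cases h : ε t <;> simp [h, add_comm]
  calc (∑ ε : Fin n → Bool, g (Function.update ε t true)) +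
      (∑ ε : Fin n → Bool, g (Function.update ε t false))
      = ∑ ε : Fin n → Bool, (g (Function.update ε t true) + g (Function.update ε t false)) := by
        rw [Finset.sum_add_distrib]
    _ = ∑ ε : Fin n → Bool,
          (g (Function.update ε t (ε t)) + g (Function.update ε t (!(ε t)))) :=
        Finset.sum_congr rfl fun ε _ => h2 ε
    _ = (∑ ε : Fin n → Bool, g (Function.update ε t (ε t))) +
          ∑ ε : Fin n → Bool, g (Function.update ε t (!(ε t))) := Finset.sum_add_distrib
    _ = 2 * ∑ ε : Fin n → Bool, g ε := by
        simp only [Function.update_eq_self, h1]; ring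

lemma merge_update {n : ℕ} (t : Fin n) (y : Fin n → Bool) (b : Bool) (ε : Fin n → Bool) :
    merge (t.1 + 1) (Function.update y t b) ε = merge t.1 y (Function.update ε t b) := by
  classical
  funext s
  unfold merge
  by_cases hs : s = t
  · subst hs; simp
  · have hst : s.1 ≠ t.1 := fun h => hs (Fin.ext h)
    rw [Function.update_of_ne hs, Function.update_of_ne hs]
    by_cases h1 : s.1 < t.1
    · simp [h1, Nat.lt_succ_of_lt h1]
    · have h2 : ¬ s.1 < t.1 + 1 := by omega
      simp [h1, h2]

lemma merge_update' {n : ℕ} (t : Fin n) (y : Fin n → Bool) (b : Bool) (ε : Fin n → Bool) :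
    merge (t.1 + 1) (Function.update y t b) ε = Function.update (merge t.1 y ε) t b := by
  classical
  funext s
  by_cases hs : s = t
  · subst hs; simp [merge]
  · have hst : s.1 ≠ t.1 := fun h => hs (Fin.ext h)
    rw [Function.update_of_ne hs]
    unfold merge
    rw [Function.update_of_ne hs]
    by_cases h1 : s.1 < t.1
    · simp [h1, Nat.lt_succ_of_lt h1]
    · have h2 : ¬ s.1 < t.1 + 1 := by omega
      simp [h1, h2]

lemma A_rec {n : ℕ} (F : (Fin n → Bool) → ℝ) (t : Fin n) (y : Fin n → Bool) :
    A F (t.1 + 1) (Function.update y t true) + A F (t.1 + 1) (Function.update y t false)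
      = 2 * A F t.1 y := by
  unfold A
  have h1 : ∀ b, (∑ ε : Fin n → Bool, F (merge (t.1 + 1) (Function.update y t b) ε))
      = ∑ ε : Fin n → Bool, F (merge t.1 y (Function.update ε t b)) := by
    intro b
    exact Finset.sum_congr rfl fun ε _ => by rw [merge_update]
  have h2 := sum_update_add (fun z => F (merge t.1 y z)) t
  rw [← add_div, h1 true, h1 false, h2]
  ring

lemma A_stab {n : ℕ} (F : (Fin n → Bool) → ℝ)
    (hF : ∀ (y : Fin n → Bool) (t : Fin n),
      |F (Function.update y t true) - F (Function.update y t false)| ≤ 1 / n)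
    (t : Fin n) (y : Fin n → Bool) :
    |A F (t.1 + 1) (Function.update y t true) - A F (t.1 + 1) (Function.update y t false)|
      ≤ 1 / n := by
  unfold A
  rw [div_sub_div_same, ← Finset.sum_sub_distrib, abs_div, abs_of_pos (by positivity :
    (0:ℝ) < 2 ^ n)]
  rw [div_le_iff₀ (by positivity : (0:ℝ) < 2 ^ n)]
  calc |∑ ε : Fin n → Bool, (F (merge (t.1 + 1) (Function.update y t true) ε)
          - F (merge (t.1 + 1) (Function.update y t false) ε))|
      ≤ ∑ ε : Fin n → Bool, |F (merge (t.1 + 1) (Function.update y t true) ε)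
          - F (merge (t.1 + 1) (Function.update y t false) ε)| :=
        Finset.abs_sum_le_sum_abs _ _
    _ ≤ ∑ _ε : Fin n → Bool, (1 / n : ℝ) := by
        refine Finset.sum_le_sum fun ε _ => ?_
        rw [merge_update' t y true ε, merge_update' t y false ε]
        exact hF (merge t.1 y ε) t
    _ = 1 / n * 2 ^ n := by
        rw [Finset.sum_const, Finset.card_univ, card_fun_bool]; simp [mul_comm]

/-- extension of a history by `b` at position `t` and junk after. -/
def ext {n : ℕ} (t : Fin n) (h : Fin t.1 → Bool) (b : Bool) : Fin n → Bool :=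
  fun s => if hs : s.1 < t.1 then h ⟨s.1, hs⟩ else if s.1 = t.1 then b else false

lemma ext_pref_eq_update {n : ℕ} (F : (Fin n → Bool) → ℝ) (y : Fin n → Bool) (t : Fin n)
    (b : Bool) : A F (t.1 + 1) (ext t (pref y t) b) = A F (t.1 + 1) (Function.update y t b) := by
  classical
  refine A_congr F _ fun s hs => ?_
  unfold ext pref
  by_cases h1 : s.1 < t.1
  · have hst : s ≠ t := fun h => by simp [h] at h1
    simp [h1, Function.update_of_ne hst]
  · have h2 : s.1 = t.1 := by omega
    have hst : s = t := Fin.ext h2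
    subst hst
    simp [h1]

lemma ext_true_eq_update {n : ℕ} (t : Fin n) (h : Fin t.1 → Bool) :
    ext t h true = Function.update (ext t h false) t true := by
  classical
  funext s
  by_cases hs : s = t
  · subst hs; simp [ext]
  · rw [Function.update_of_ne hs]
    have hst : s.1 ≠ t.1 := fun hh => hs (Fin.ext hh)
    unfold ext
    by_cases h1 : s.1 < t.1 <;> simp [h1, hst]

lemma ext_false_eq_update {n : ℕ} (t : Fin n) (h : Fin t.1 → Bool) :
    ext t h false = Function.update (ext t h false) t false := by
  classical
  funext s
  by_cases hs : s = t
  · subst hs; simp [ext]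
  · rw [Function.update_of_ne hs]

end PredAux

open PredAux in
theorem prediction_iid_side_information (n : ℕ) (hn : 1 ≤ n)
    {X : Type} [MeasurableSpace X] (P : Measure X) [IsProbabilityMeasure P]
    (φ : (Fin n → X) → (Fin n → Bool) → ℝ)
    (hmeas : ∀ y : Fin n → Bool, Measurable fun x => φ x y)
    (hbdd : ∃ C : ℝ, ∀ (x : Fin n → X) (y : Fin n → Bool), |φ x y| ≤ C)
    (hstable : ∀ (x : Fin n → X) (y : Fin n → Bool) (t : Fin n),
      |φ x (Function.update y t true) - φ x (Function.update y t false)| ≤ 1 / n) :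
    (∃ q : (t : Fin n) → (Fin (t.1 + 1) → X) → (Fin t.1 → Bool) → ℝ,
      (∀ (t : Fin n) (xs : Fin (t.1 + 1) → X) (h : Fin t.1 → Bool), |q t xs h| ≤ 1) ∧
      (∀ (t : Fin n) (h : Fin t.1 → Bool), Measurable fun xs => q t xs h) ∧
      ∀ y : Fin n → Bool,
        (∫ x, (1 / n) * ∑ t : Fin n,
            (1 - sgn (y t) * q t (fun s => x (Fin.castLE t.isLt s)) (pref y t)) / 2
          ∂(Measure.pi fun _ : Fin n => P)) ≤
        ∫ x, φ x y ∂(Measure.pi fun _ : Fin n => P)) ↔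
    1 / 2 ≤ (∑ ε : Fin n → Bool, ∫ x, φ x ε ∂(Measure.pi fun _ : Fin n => P)) / 2 ^ n := by
  classical
  set μ : Measure (Fin n → X) := Measure.pi fun _ : Fin n => P with hμ
  have hnR : (0:ℝ) < n := by exact_mod_cast hn
  obtain ⟨C, hC⟩ := hbdd
  have hint : ∀ y : Fin n → Bool, Integrable (fun x => φ x y) μ := by
    intro y
    refine Integrable.mono' (integrable_const C) (hmeas y).aestronglyMeasurable ?_
    exact Filter.Eventually.of_forall fun x => by
      simpa [Real.norm_eq_abs] using hC x y
  set F : (Fin n → Bool) → ℝ := fun y => ∫ x, φ x y ∂μ with hF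
  have hFstab : ∀ (y : Fin n → Bool) (t : Fin n),
      |F (Function.update y t true) - F (Function.update y t false)| ≤ 1 / n := by
    intro y t
    have := integral_sub (hint (Function.update y t true)) (hint (Function.update y t false))
    rw [hF]
    simp only
    rw [← this]
    calc |∫ x, (φ x (Function.update y t true) - φ x (Function.update y t false)) ∂μ|
        ≤ ∫ x, |φ x (Function.update y t true) - φ x (Function.update y t false)| ∂μ := by
          simpa [Real.norm_eq_abs] using
            norm_integral_le_integral_norm
              (fun x => φ x (Function.update y t true) - φ x (Function.update y t false)) (μ := μ)
      _ ≤ ∫ _x, (1 / n : ℝ) ∂μ := by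
          refine integral_mono ?_ (integrable_const _) fun x => hstable x y t
          exact ((hint _).sub (hint _)).abs
      _ = 1 / n := by simp
  constructor
  · -- forward direction
    rintro ⟨q, hq1, hq2, hq3⟩
    set L : (Fin n → Bool) → (Fin n → X) → ℝ := fun y x =>
      (1 / n) * ∑ t : Fin n,
        (1 - sgn (y t) * q t (fun s => x (Fin.castLE t.isLt s)) (pref y t)) / 2 with hL
    have hLmeas : ∀ y, Measurable (L y) := by
      intro y
      apply Measurable.const_mul
      apply Finset.measurable_sum
      intro t _
      apply Measurable.div_const
      apply Measurable.const_sub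
      apply Measurable.const_mul
      exact (hq2 t (pref y t)).comp
        (measurable_pi_lambda _ fun s => measurable_pi_apply _)
    have hLbdd : ∀ y x, |L y x| ≤ 1 := by
      intro y x
      rw [hL]
      simp only
      rw [abs_mul]
      have h1 : ∀ t : Fin n,
          |(1 - sgn (y t) * q t (fun s => x (Fin.castLE t.isLt s)) (pref y t)) / 2| ≤ 1 := by
        intro t
        have := hq1 t (fun s => x (Fin.castLE t.isLt s)) (pref y t)
        have habs : |sgn (y t) * q t (fun s => x (Fin.castLE t.isLt s)) (pref y t)| ≤ 1 := by
          rw [abs_mul, sgn_abs, one_mul]; exact this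
        rw [abs_div, abs_of_pos (by norm_num : (0:ℝ) < 2)]
        rw [div_le_one (by norm_num : (0:ℝ) < 2)]
        have := abs_le.mp habs
        rw [abs_le]
        constructor <;> linarith [this.1, this.2]
      calc |1 / (n:ℝ)| * |∑ t : Fin n,
            (1 - sgn (y t) * q t (fun s => x (Fin.castLE t.isLt s)) (pref y t)) / 2|
          ≤ (1 / n) * ∑ t : Fin n, (1:ℝ) := by
            refine mul_le_mul (le_of_eq (abs_of_pos (by positivity))) ?_ (abs_nonneg _)
              (by positivity)
            exact (Finset.abs_sum_le_sum_abs _ _).trans (Finset.sum_le_sum fun t _ => h1 t)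
        _ = 1 := by
            rw [Finset.sum_const, Finset.card_univ, Fintype.card_fin, nsmul_eq_mul]
            field_simp
    have hLint : ∀ y, Integrable (L y) μ := by
      intro y
      refine Integrable.mono' (integrable_const 1) (hLmeas y).aestronglyMeasurable ?_
      exact Filter.Eventually.of_forall fun x => by
        simpa [Real.norm_eq_abs] using hLbdd y x
    have hsum : ∀ x : Fin n → X, ∑ y : Fin n → Bool, L y x = 2 ^ n / 2 := by
      intro x
      rw [hL]
      simp only
      rw [← Finset.mul_sum, Finset.sum_comm]
      have hS : ∀ t : Fin n, (∑ y : Fin n → Bool,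
          (1 - sgn (y t) * q t (fun s => x (Fin.castLE t.isLt s)) (pref y t)) / 2)
          = 2 ^ n / 2 := by
        intro t
        have hzero : (∑ y : Fin n → Bool,
            sgn (y t) * q t (fun s => x (Fin.castLE t.isLt s)) (pref y t)) = 0 := by
          set f : (Fin n → Bool) → ℝ := fun y =>
            sgn (y t) * q t (fun s => x (Fin.castLE t.isLt s)) (pref y t) with hf
          have hinv : Function.Involutive
              (fun y : Fin n → Bool => Function.update y t (!(y t))) := by
            intro y
            funext s
            by_cases hs : s = t
            · subst hs; simp
            · simp [Function.update_of_ne hs]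
          have hcomp : (∑ y : Fin n → Bool, f (Function.update y t (!(y t))))
              = ∑ y : Fin n → Bool, f y := hinv.bijective.sum_comp f
          have hneg : ∀ y : Fin n → Bool, f (Function.update y t (!(y t))) = - f y := by
            intro y
            rw [hf]
            simp only
            have h1 : Function.update y t (!(y t)) t = !(y t) := by simp
            have h2 : pref (Function.update y t (!(y t))) t = pref y t := by
              funext s
              unfold pref
              have hs : (⟨s.1, s.2.trans t.2⟩ : Fin n) ≠ t := by
                intro h
                have := congrArg Fin.val h
                simp at this
                omega
              rw [Function.update_of_ne hs]
            rw [h1, h2, sgn_not]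
            ring
          have h4 : (∑ y : Fin n → Bool, f y) = ∑ y : Fin n → Bool, - f y := by
            rw [← hcomp]
            exact Finset.sum_congr rfl fun y _ => hneg y
          rw [Finset.sum_neg_distrib] at h4
          linarith [h4]
        rw [← Finset.sum_div, Finset.sum_sub_distrib, hzero, sub_zero, Finset.sum_const,
          Finset.card_univ, card_fun_bool, nsmul_eq_mul]
        push_cast
        ring
      rw [Finset.sum_congr rfl fun t _ => hS t, Finset.sum_const, Finset.card_univ,
        Fintype.card_fin, nsmul_eq_mul]
      field_simp
    have hkey : (2:ℝ) ^ n / 2 ≤ ∑ y : Fin n → Bool, F y := by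
      have h1 : (∑ y : Fin n → Bool, ∫ x, L y x ∂μ) ≤ ∑ y : Fin n → Bool, F y :=
        Finset.sum_le_sum fun y _ => hq3 y
      have h2 : (∑ y : Fin n → Bool, ∫ x, L y x ∂μ) = ∫ x, ∑ y : Fin n → Bool, L y x ∂μ :=
        (integral_finset_sum _ fun y _ => hLint y).symm
      have h3 : (∫ x, ∑ y : Fin n → Bool, L y x ∂μ) = 2 ^ n / 2 := by
        rw [integral_congr_ae (Filter.Eventually.of_forall hsum)]
        simp [hμ]
      linarith [h1, h2.symm.trans_le h1, h3]
    rw [le_div_iff₀ (by positivity : (0:ℝ) < 2 ^ n)]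
    calc (1:ℝ) / 2 * 2 ^ n = 2 ^ n / 2 := by ring
      _ ≤ ∑ y : Fin n → Bool, F y := hkey
  · -- backward direction
    intro havg
    have havg' : (1:ℝ) / 2 ≤ A F 0 (fun _ => false) := by
      rw [A_zero]; exact havg
    refine ⟨fun t _ h => (n : ℝ) * (A F (t.1 + 1) (ext t h false) - A F (t.1 + 1) (ext t h true)),
      ?_, ?_, ?_⟩
    · intro t xs h
      rw [abs_mul, abs_of_pos hnR]
      have : |A F (t.1 + 1) (ext t h false) - A F (t.1 + 1) (ext t h true)| ≤ 1 / n := by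
        rw [abs_sub_comm]
        have := A_stab F hFstab t (ext t h false)
        rwa [← ext_true_eq_update, ← ext_false_eq_update] at this
      calc (n:ℝ) * |A F (t.1 + 1) (ext t h false) - A F (t.1 + 1) (ext t h true)|
          ≤ n * (1 / n) := by
            exact mul_le_mul_of_nonneg_left this (le_of_lt hnR)
        _ = 1 := by field_simp
    · intro t h
      exact measurable_const
    · intro y
      -- the integrand is constant in x
      have hterm : ∀ t : Fin n,
          (1 - sgn (y t) * ((n:ℝ) * (A F (t.1 + 1) (ext t (pref y t) false)
              - A F (t.1 + 1) (ext t (pref y t) true)))) / 2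
            = 1 / 2 + n * (A F (t.1 + 1) y - A F t.1 y) := by
        intro t
        rw [ext_pref_eq_update, ext_pref_eq_update]
        have hrec := A_rec F t y
        cases hyt : y t
        · have hupd : Function.update y t false = y := by
            rw [← hyt]; exact Function.update_eq_self t y
          rw [hupd] at hrec ⊢
          simp only [sgn, hyt]
          norm_num
          linear_combination (-(n:ℝ)/2) * hrec
        · have hupd : Function.update y t true = y := by
            rw [← hyt]; exact Function.update_eq_self t y
          rw [hupd] at hrec ⊢
          simp only [sgn, hyt]
          norm_num
          linear_combination (-(n:ℝ)/2) * hrec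
      have hconst : ∀ x : Fin n → X,
          (1 / (n:ℝ)) * ∑ t : Fin n,
            (1 - sgn (y t) * ((n:ℝ) * (A F (t.1 + 1) (ext t (pref y t) false)
                - A F (t.1 + 1) (ext t (pref y t) true)))) / 2
          = 1 / 2 + (F y - A F 0 y) := by
        intro x
        rw [Finset.sum_congr rfl fun t _ => hterm t, Finset.sum_add_distrib,
          ← Finset.mul_sum]
        have htel : (∑ t : Fin n, (A F (t.1 + 1) y - A F t.1 y)) = A F n y - A F 0 y := by
          rw [Fin.sum_univ_eq_sum_range (fun i => A F (i + 1) y - A F i y) n]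
          exact Finset.sum_range_sub (fun i => A F i y) n
        rw [htel, A_top, Finset.sum_const, Finset.card_univ, Fintype.card_fin]
        field_simp
        ring
      have hA0 : A F 0 y = A F 0 (fun _ => false) := A_congr F 0 fun s hs => by omega
      calc (∫ x, (1 / (n:ℝ)) * ∑ t : Fin n,
            (1 - sgn (y t) * ((n:ℝ) * (A F (t.1 + 1) (ext t (pref y t) false)
                - A F (t.1 + 1) (ext t (pref y t) true)))) / 2 ∂μ)
          = 1 / 2 + (F y - A F 0 y) := by
            rw [integral_congr_ae (Filter.Eventually.of_forall hconst)]
            simp [hμ]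
        _ ≤ F y := by
            rw [hA0]
            linarith [havg']
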